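/- Let ⟨·|·⟩ be a strong compatibility support mapping for S and D(X,A) = ⟨X|{1}⟩ ⊖ ⟨X|A∖X⟩. Then for finite U, V ⊆ S: if U ∩ V ≠ ∅ then ⟨U|V⟩ = D(U,U); and if U ∩ V = ∅ then ⟨U|V⟩ = ⊕_{∅≠Y⊆V} D(U∪Y, U∪V). -/

import Mathlib

universe u

/-- An effect algebra: a partial commutative, associative operation `add`
(modelled as an `Option`-valued total operation), with constants `zero`, `one`,
unique orthosupplements, and `a ⊕ 1` defined only for `a = 0`. -/
structure EffectAlgebra (α : Type u) where
  add : α → α → Option α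
  zero : α
  one : α
  add_comm : ∀ a b : α, add a b = add b a
  add_assoc : ∀ a b c ab abc : α, add a b = some ab → add ab c = some abc →
    ∃ bc : α, add b c = some bc ∧ add a bc = some abc
  orthosupp : ∀ a : α, ∃! a' : α, add a a' = some one
  add_one : ∀ a b : α, add a one = some b → a = zero

namespace EffectAlgebra

variable {α : Type u}

/-- The induced order: `a ≤ b` iff `∃ c, a ⊕ c = b`. -/
def le (E : EffectAlgebra α) (a b : α) : Prop := ∃ c, E.add a c = some b

/-- The orthosupplement `a'`. -/
noncomputable def compl (E : EffectAlgebra α) (a : α) : α :=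
  (E.orthosupp a).exists.choose

open Classical in
/-- The partial difference `b ⊖ a` (junk value `0` when `a ≤ b` fails). -/
noncomputable def sub (E : EffectAlgebra α) (b a : α) : α :=
  if h : ∃ c, E.add a c = some b then h.choose else E.zero

/-- Iterated partial sum of a list of elements. -/
noncomputable def osum (E : EffectAlgebra α) : List α → Option α
  | [] => some E.zero
  | a :: l => (E.osum l).bind fun s => E.add a s

end EffectAlgebra

namespace EffectAlgebra

variable {α : Type u}

/-- `f` is a compatibility support mapping for `S` (with `1 ∈ S`). -/
def IsCSM [DecidableEq α] (E : EffectAlgebra α) (S : Set α) (f : Finset α → Finset α → α) : Prop :=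
  E.one ∈ S ∧
  (∀ U V₁ V₂ : Finset α, ↑U ⊆ S → ↑V₁ ⊆ S → ↑V₂ ⊆ S → V₁ ⊆ V₂ →
    E.le (f U V₁) (f U V₂)) ∧
  (∀ U V : Finset α, ↑U ⊆ S → ↑V ⊆ S → E.le (f U V) (f U {E.one})) ∧
  (∀ U : Finset α, ↑U ⊆ S → f U ∅ = E.zero) ∧
  (∀ c ∈ S, f ∅ {c} = c) ∧
  (∀ (U V : Finset α) (c : α), ↑U ⊆ S → ↑V ⊆ S → c ∈ S → c ∉ U → c ∉ V →
    E.sub (f (insert c U) {E.one}) (f (insert c U) V) =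
      E.sub (f U (insert c V)) (f U V))

/-- `f` is a strong compatibility support mapping for `S`:
condition (e*) holds with no restriction on `c`. -/
def IsStrongCSM [DecidableEq α] (E : EffectAlgebra α) (S : Set α) (f : Finset α → Finset α → α) : Prop :=
  E.one ∈ S ∧
  (∀ U V₁ V₂ : Finset α, ↑U ⊆ S → ↑V₁ ⊆ S → ↑V₂ ⊆ S → V₁ ⊆ V₂ →
    E.le (f U V₁) (f U V₂)) ∧
  (∀ U V : Finset α, ↑U ⊆ S → ↑V ⊆ S → E.le (f U V) (f U {E.one})) ∧
  (∀ U : Finset α, ↑U ⊆ S → f U ∅ = E.zero) ∧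
  (∀ c ∈ S, f ∅ {c} = c) ∧
  (∀ (U V : Finset α) (c : α), ↑U ⊆ S → ↑V ⊆ S → c ∈ S →
    E.sub (f (insert c U) {E.one}) (f (insert c U) V) =
      E.sub (f U (insert c V)) (f U V))

/-- `D(X,A) = ⟨X|{1}⟩ ⊖ ⟨X|A∖X⟩`. -/
noncomputable def Dmap [DecidableEq α] (E : EffectAlgebra α)
    (f : Finset α → Finset α → α) (X A : Finset α) : α :=
  E.sub (f X {E.one}) (f X (A \ X))

end EffectAlgebra

/-!
Condition (e) makes `D` telescope: for `c ∉ X ∪ A` it gives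
`D(cX, cA) = ⟨X|c(A∖X)⟩ ⊖ ⟨X|A∖X⟩`, while `D(X, cA) = ⟨X|{1}⟩ ⊖ ⟨X|c(A∖X)⟩`, so
`D(X, cA) ⊕ D(cX, cA) = D(X, A)`. By induction on `V`, the
`D(U∪Y, U∪V)` over all `Y ⊆ V` therefore sum to `D(U, U) = ⟨U|{1}⟩`; the term `Y = ∅` is
`⟨U|{1}⟩ ⊖ ⟨U|V⟩`, so cancellation leaves `⟨U|V⟩`. If instead `c ∈ U ∩ V`, condition (e*) for
`V ∖ {c}` gives `⟨U|{1}⟩ ⊖ ⟨U|V∖c⟩ = ⟨U|V⟩ ⊖ ⟨U|V∖c⟩`, hence `⟨U|V⟩ = ⟨U|{1}⟩ = D(U, U)`.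
-/

namespace EffectAlgebra

variable {α : Type u} (E : EffectAlgebra α) {a b c t : α}

theorem orthosupp_unique (hb : E.add a b = some E.one) (hc : E.add a c = some E.one) : b = c :=
  (E.orthosupp a).unique hb hc

/-- If `t ⊕ t' = 1`, then both `b` and `c` are the orthosupplement of `t' ⊕ a`. -/
theorem add_left_cancel (hb : E.add a b = some t) (hc : E.add a c = some t) : b = c := by
  obtain ⟨t', ht', -⟩ := E.orthosupp t
  obtain ⟨s, hbs, has⟩ := E.add_assoc a b t' t E.one hb ht'
  obtain ⟨s', hcs, has'⟩ := E.add_assoc a c t' t E.one hc ht'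
  obtain rfl : s = s' := E.orthosupp_unique has has'
  obtain ⟨r, htr, hbr⟩ := E.add_assoc b t' a s E.one hbs ((E.add_comm s a).trans has)
  obtain ⟨r', htr', hcr⟩ := E.add_assoc c t' a s E.one hcs ((E.add_comm s a).trans has)
  obtain rfl : r = r' := Option.some.inj (htr.symm.trans htr')
  exact E.orthosupp_unique ((E.add_comm r b).trans hbr) ((E.add_comm r c).trans hcr)

theorem add_assoc_symm {bc abc : α} (hbc : E.add b c = some bc) (habc : E.add a bc = some abc) :
    ∃ ab, E.add a b = some ab ∧ E.add ab c = some abc := by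
  obtain ⟨ca, hca, hbca⟩ := E.add_assoc b c a bc abc hbc ((E.add_comm bc a).trans habc)
  obtain ⟨ab, hab, hcab⟩ := E.add_assoc c a b ca abc hca ((E.add_comm ca b).trans hbca)
  exact ⟨ab, hab, (E.add_comm ab c).trans hcab⟩

theorem one_add_zero : E.add E.one E.zero = some E.one := by
  obtain ⟨z, hz, -⟩ := E.orthosupp E.one
  obtain rfl : z = E.zero := E.add_one z E.one ((E.add_comm z E.one).trans hz)
  exact hz

theorem add_zero (a : α) : E.add a E.zero = some a := by
  obtain ⟨a', ha', -⟩ := E.orthosupp a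
  obtain ⟨a0, ha0, ha'a0⟩ := E.add_assoc a' a E.zero E.one E.one
    ((E.add_comm a' a).trans ha') E.one_add_zero
  obtain rfl : a0 = a := E.add_left_cancel ha'a0 ((E.add_comm a' a).trans ha')
  exact ha0

theorem sub_eq_of_add_eq (h : E.add a c = some b) : E.sub b a = c := by
  have hex : ∃ c, E.add a c = some b := ⟨c, h⟩
  rw [sub, dif_pos hex]
  exact E.add_left_cancel hex.choose_spec h

theorem add_sub_of_le (h : E.le a b) : E.add a (E.sub b a) = some b := by
  obtain ⟨c, hc⟩ := h
  rwa [E.sub_eq_of_add_eq hc]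

theorem sub_zero (b : α) : E.sub b E.zero = b :=
  E.sub_eq_of_add_eq ((E.add_comm _ _).trans (E.add_zero b))

theorem sub_add_sub_cancel (hab : E.le a b) (hbt : E.le b t) :
    E.add (E.sub t b) (E.sub b a) = some (E.sub t a) := by
  obtain ⟨w, hw, haw⟩ := E.add_assoc a _ _ b t (E.add_sub_of_le hab) (E.add_sub_of_le hbt)
  rw [E.sub_eq_of_add_eq haw, E.add_comm]
  exact hw

/-- Partial sums in `E`: `none` records an undefined sum. -/
def PartialSum (_E : EffectAlgebra α) : Type u := Option α

def PartialSum.of (a : α) : E.PartialSum := some a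

noncomputable instance : Add E.PartialSum where
  add x y := Option.bind x fun a => Option.bind y (E.add a)

instance : Zero E.PartialSum where
  zero := PartialSum.of E E.zero

theorem PartialSum.of_add_of (a b : α) : PartialSum.of E a + PartialSum.of E b = E.add a b := rfl

theorem PartialSum.of_add_left_cancel {x y : E.PartialSum}
    (hx : PartialSum.of E a + x = PartialSum.of E t)
    (hy : PartialSum.of E a + y = PartialSum.of E t) : x = y := by
  rcases x with _ | b; · cases hx
  rcases y with _ | c; · cases hy
  exact congrArg some (E.add_left_cancel hx hy)

noncomputable instance : AddCommMonoid E.PartialSum where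
  add_assoc x y z := by
    rcases x with _ | a; · rfl
    rcases y with _ | b; · rfl
    rcases z with _ | c; · change Option.bind (E.add a b) _ = none; cases E.add a b <;> rfl
    refine Option.ext fun r => ?_
    change r ∈ Option.bind (E.add a b) _ ↔ r ∈ Option.bind (E.add b c) _
    simp only [Option.mem_def, Option.bind_eq_some_iff, Option.some.injEq, exists_eq_left']
    exact ⟨fun ⟨ab, hab, habc⟩ => E.add_assoc a b c ab r hab habc,
      fun ⟨bc, hbc, habc⟩ => E.add_assoc_symm hbc habc⟩
  zero_add x := by
    rcases x with _ | a
    · rfl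
    · exact (E.add_comm _ _).trans (E.add_zero a)
  add_zero x := by
    rcases x with _ | a
    · rfl
    · exact E.add_zero a
  add_comm x y := by
    rcases x with _ | a <;> rcases y with _ | b
    · rfl
    · rfl
    · rfl
    · exact E.add_comm a b
  nsmul := nsmulRec

theorem osum_eq_sum (l : List α) : E.osum l = (l.map (PartialSum.of E)).sum := by
  induction l with
  | nil => rfl
  | cons a l ih => rw [List.map_cons, List.sum_cons, ← ih]; rfl

section CSM

variable {E} [DecidableEq α] {S : Set α} {f : Finset α → Finset α → α}

theorem IsStrongCSM.isCSM (hf : E.IsStrongCSM S f) : E.IsCSM S f :=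
  let ⟨h1, hmono, hle, hempty, hsingle, hstar⟩ := hf
  ⟨h1, hmono, hle, hempty, hsingle, fun U V c hU hV hc _ _ => hstar U V c hU hV hc⟩

theorem IsCSM.Dmap_self (hf : E.IsCSM S f) {U : Finset α} (hU : ↑U ⊆ S) :
    E.Dmap f U U = f U {E.one} := by
  obtain ⟨-, -, -, hempty, -, -⟩ := hf
  rw [Dmap, Finset.sdiff_self, hempty U hU, sub_zero]

theorem IsCSM.add_Dmap_union (hf : E.IsCSM S f) {U V : Finset α} (hUV : Disjoint U V)
    (hU : ↑U ⊆ S) (hV : ↑V ⊆ S) :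
    E.add (f U V) (E.Dmap f U (U ∪ V)) = some (f U {E.one}) := by
  obtain ⟨-, -, hle, -, -, -⟩ := hf
  rw [Dmap, Finset.union_sdiff_cancel_left hUV]
  exact E.add_sub_of_le (hle U V hU hV)

theorem IsCSM.Dmap_add_Dmap_insert (hf : E.IsCSM S f) {X A : Finset α} {c : α}
    (hX : ↑X ⊆ S) (hA : ↑A ⊆ S) (hc : c ∈ S) (hcX : c ∉ X) (hcA : c ∉ A) :
    E.add (E.Dmap f X (insert c A)) (E.Dmap f (insert c X) (insert c A)) =
      some (E.Dmap f X A) := by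
  obtain ⟨-, hmono, hle, -, -, hstar⟩ := hf
  have hAX : ↑(A \ X) ⊆ S := (Finset.coe_subset.2 Finset.sdiff_subset).trans hA
  have hcAX : ↑(insert c (A \ X)) ⊆ S := by
    rw [Finset.coe_insert]; exact Set.insert_subset hc hAX
  have hstarX := hstar X (A \ X) c hX hAX hc hcX (fun h => hcA (Finset.mem_sdiff.1 h).1)
  rw [Dmap, Dmap, Dmap, Finset.insert_sdiff_of_notMem _ hcX, Finset.insert_sdiff_insert,
    Finset.sdiff_insert_of_notMem hcA, hstarX]
  exact E.sub_add_sub_cancel (hmono X _ _ hX hAX hcAX (Finset.subset_insert c _)) (hle X _ hX hcAX)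

theorem IsCSM.sum_powerset_Dmap (hf : E.IsCSM S f) {U V : Finset α} (hUV : Disjoint U V)
    (hU : ↑U ⊆ S) (hV : ↑V ⊆ S) :
    ∑ Y ∈ V.powerset, PartialSum.of E (E.Dmap f (U ∪ Y) (U ∪ V)) =
      PartialSum.of E (f U {E.one}) := by
  induction V using Finset.induction_on with
  | empty => rw [Finset.powerset_empty, Finset.sum_singleton, Finset.union_empty, hf.Dmap_self hU]
  | @insert c V hcV ih =>
    obtain ⟨hcU, hUV⟩ := Finset.disjoint_insert_right.1 hUV
    obtain ⟨hc, hV⟩ := Set.insert_subset_iff.1 (Finset.coe_insert c V ▸ hV)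
    rw [Finset.sum_powerset_insert hcV, ← Finset.sum_add_distrib, ← ih hUV hV]
    refine Finset.sum_congr rfl fun Y hY => ?_
    have hYV := Finset.mem_powerset.1 hY
    have hUY : ↑(U ∪ Y) ⊆ S := by
      rw [Finset.coe_union]; exact Set.union_subset hU ((Finset.coe_subset.2 hYV).trans hV)
    have hUV' : ↑(U ∪ V) ⊆ S := by rw [Finset.coe_union]; exact Set.union_subset hU hV
    rw [Finset.union_insert, Finset.union_insert]
    exact hf.Dmap_add_Dmap_insert hUY hUV' hc
      (Finset.notMem_union.2 ⟨hcU, fun h => hcV (hYV h)⟩) (Finset.notMem_union.2 ⟨hcU, hcV⟩)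

theorem IsCSM.osum_Dmap (hf : E.IsCSM S f) {U V : Finset α} (hUV : Disjoint U V)
    (hU : ↑U ⊆ S) (hV : ↑V ⊆ S) :
    E.osum (((V.powerset.erase ∅).toList).map (fun Y => E.Dmap f (U ∪ Y) (U ∪ V))) =
      some (f U V) := by
  rw [osum_eq_sum, List.map_map, Finset.sum_map_toList]
  apply PartialSum.of_add_left_cancel E (a := E.Dmap f U (U ∪ V)) (t := f U {E.one})
    (y := PartialSum.of E (f U V))
  · rw [← hf.sum_powerset_Dmap hUV hU hV,
      ← Finset.add_sum_erase _ _ (Finset.empty_mem_powerset V), Finset.union_empty]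
    rfl
  · rw [PartialSum.of_add_of, E.add_comm]
    exact hf.add_Dmap_union hUV hU hV

theorem IsStrongCSM.apply_eq_apply_one (hf : E.IsStrongCSM S f) {U V : Finset α}
    (hU : ↑U ⊆ S) (hV : ↑V ⊆ S) (hUV : (U ∩ V).Nonempty) : f U V = f U {E.one} := by
  obtain ⟨c, hc⟩ := hUV
  obtain ⟨hcU, hcV⟩ := Finset.mem_inter.1 hc
  obtain ⟨-, hmono, hle, -, -, hstar⟩ := hf
  have hVc : ↑(V.erase c) ⊆ S := (Finset.coe_subset.2 (Finset.erase_subset c V)).trans hV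
  have hsub := hstar U (V.erase c) c hU hVc (hU hcU)
  rw [Finset.insert_eq_self.2 hcU, Finset.insert_erase hcV] at hsub
  have hone := E.add_sub_of_le (hle U _ hU hVc)
  have hfV := E.add_sub_of_le (hmono U _ V hU hVc hV (Finset.erase_subset c V))
  rw [hsub] at hone
  exact Option.some.inj (hfV.symm.trans hone)

end CSM

end EffectAlgebra

/-- A strong compatibility support mapping is determined by its `D`:
if `U ∩ V ≠ ∅` then `⟨U|V⟩ = D(U,U)`, and if `U ∩ V = ∅` then
`⟨U|V⟩ = ⊕_{∅ ≠ Y ⊆ V} D(U∪Y, U∪V)`. -/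
theorem strongCSM_eq_D_sum {α : Type u} [DecidableEq α] (E : EffectAlgebra α)
    (S : Set α) (f : Finset α → Finset α → α) (hf : E.IsStrongCSM S f)
    (U V : Finset α) (hU : ↑U ⊆ S) (hV : ↑V ⊆ S) :
    (U ∩ V ≠ ∅ → f U V = E.Dmap f U U) ∧
    (U ∩ V = ∅ →
      E.osum (((V.powerset.erase ∅).toList).map
        (fun Y => E.Dmap f (U ∪ Y) (U ∪ V))) = some (f U V)) := by
  refine ⟨fun hUV => ?_, fun hUV => ?_⟩
  · rw [hf.isCSM.Dmap_self hU]
    exact hf.apply_eq_apply_one hU hV (Finset.nonempty_iff_ne_empty.2 hUV)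
  · exact hf.isCSM.osum_Dmap (Finset.disjoint_iff_inter_eq_empty.2 hUV) hU hV
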